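/- arXiv:2212.12115 — 4 statements merged into one kernel-verified Lean document; each statement's English description precedes it below -/
import Mathlib

section
/- Let $q < 0$ and let $h : [r_0, r_1] \to \mathbb{R}$ be a $C^1$ function with $0 < r_0 < r_1$. If $r_0^{q} |h(r_0)|^2 \leq D_0$, then $-\frac{2}{q} r_1^{q} |h(r_1)|^2 + \int_{r_0}^{r_1} r^{q-1} |h(r)|^2 \, dr \leq \frac{4}{q^2} \int_{r_0}^{r_1} r^{q+1} |h'(r)|^2 \, dr - \frac{2}{q} D_0$. -/
/-!
Integrating `(r ^ q * h r ^ 2)' = q r ^ (q - 1) h ^ 2 + 2 r ^ q h h'` over `[r₀, r₁]` turns the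
boundary terms into an integral, and the cross term `2 r ^ q h h'` is absorbed by the
completed square `r ^ (q - 1) (h + (2 / q) r h') ^ 2 ≥ 0`.
-/

open Set intervalIntegral

lemma rpow_sub_one_mul_sq_le {q r : ℝ} (hq : q ≠ 0) (hr : 0 < r) (a b : ℝ) :
    r ^ (q - 1) * a ^ 2 ≤ 4 / q ^ 2 * (r ^ (q + 1) * b ^ 2)
      + 2 / q * (q * r ^ (q - 1) * a ^ 2 + r ^ q * (2 * a * b)) := by
  have hsq : 4 / q ^ 2 * (r ^ (q + 1) * b ^ 2)
      + 2 / q * (q * r ^ (q - 1) * a ^ 2 + r ^ q * (2 * a * b)) - r ^ (q - 1) * a ^ 2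
      = r ^ (q - 1) * (a + 2 / q * r * b) ^ 2 := by
    rw [Real.rpow_add hr, Real.rpow_sub hr, Real.rpow_one]
    field_simp
    ring
  have := mul_nonneg (Real.rpow_pos_of_pos hr (q - 1)).le (sq_nonneg (a + 2 / q * r * b))
  linarith

theorem integral_rpow_sub_one_mul_sq_le {q a b : ℝ} {h h' : ℝ → ℝ} (hq : q ≠ 0) (ha : 0 < a)
    (hab : a ≤ b) (hderiv : ∀ r ∈ Icc a b, HasDerivAt h (h' r) r)
    (hcont : ContinuousOn h' (Icc a b)) :
    ∫ r in a..b, r ^ (q - 1) * h r ^ 2 ≤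
      4 / q ^ 2 * (∫ r in a..b, r ^ (q + 1) * h' r ^ 2)
        + 2 / q * (b ^ q * h b ^ 2 - a ^ q * h a ^ 2) := by
  have hpos : ∀ r ∈ Icc a b, 0 < r := fun r hr => ha.trans_le hr.1
  have hrpow (p : ℝ) : ContinuousOn (fun r : ℝ => r ^ p) (Icc a b) :=
    continuousOn_id.rpow_const fun r hr => Or.inl (hpos r hr).ne'
  have hh : ContinuousOn h (Icc a b) := fun r hr => (hderiv r hr).continuousAt.continuousWithinAt
  have integrable {f : ℝ → ℝ} (hf : ContinuousOn f (Icc a b)) :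
      IntervalIntegrable f MeasureTheory.volume a b :=
    hf.intervalIntegrable_of_Icc hab
  have hIcc : uIcc a b = Icc a b := uIcc_of_le hab
  have hFTC : ∫ r in a..b, q * r ^ (q - 1) * h r ^ 2 + r ^ q * (2 * h r * h' r)
      = b ^ q * h b ^ 2 - a ^ q * h a ^ 2 :=
    integral_deriv_mul_eq_sub
      (fun r hr => Real.hasDerivAt_rpow_const (Or.inl (hpos r (hIcc ▸ hr)).ne'))
      (fun r hr => by simpa [mul_comm, mul_assoc] using (hderiv r (hIcc ▸ hr)).fun_pow 2)
      (integrable (continuousOn_const.mul (hrpow _)))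
      (integrable ((continuousOn_const.mul hh).mul hcont))
  calc ∫ r in a..b, r ^ (q - 1) * h r ^ 2
      ≤ ∫ r in a..b, 4 / q ^ 2 * (r ^ (q + 1) * h' r ^ 2)
          + 2 / q * (q * r ^ (q - 1) * h r ^ 2 + r ^ q * (2 * h r * h' r)) :=
        integral_mono_on hab (integrable ((hrpow _).mul (hh.pow 2)))
          (integrable (by fun_prop))
          fun r hr => rpow_sub_one_mul_sq_le hq (hpos r hr) _ _
    _ = _ := by
        rw [integral_add, integral_const_mul, integral_const_mul, hFTC]
        · exact integrable (continuousOn_const.mul ((hrpow _).mul (hcont.pow 2)))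
        · exact integrable (continuousOn_const.mul (by fun_prop))

/-- Hardy inequality on an interval, boundary term at the left endpoint (Lemma 3.1 i). -/
theorem hardy_inequality_left (q r0 r1 D0 : ℝ) (h h' : ℝ → ℝ)
    (hq : q < 0) (hr0 : 0 < r0) (hr01 : r0 < r1)
    (hderiv : ∀ r ∈ Set.Icc r0 r1, HasDerivAt h (h' r) r)
    (hcont : ContinuousOn h' (Set.Icc r0 r1))
    (hD0 : r0 ^ q * |h r0| ^ 2 ≤ D0) :
    -(2 / q) * (r1 ^ q * |h r1| ^ 2) + ∫ r in r0..r1, r ^ (q - 1) * |h r| ^ 2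
      ≤ (4 / q ^ 2) * (∫ r in r0..r1, r ^ (q + 1) * |h' r| ^ 2) - (2 / q) * D0 := by
  simp only [sq_abs] at hD0 ⊢
  have hHardy := integral_rpow_sub_one_mul_sq_le hq.ne hr0 hr01.le hderiv hcont
  have hboundary : 2 / q * D0 ≤ 2 / q * (r0 ^ q * h r0 ^ 2) :=
    mul_le_mul_of_nonpos_left hD0 (div_neg_of_pos_of_neg two_pos hq).le
  linarith
end

section
/- Let $q > 0$ and let $h : [r_0, r_1] \to \mathbb{R}$ be a $C^1$ function with $0 < r_0 < r_1$. If $r_1^{q} |h(r_1)|^2 \leq D_0$, then $\frac{2}{q} r_0^{q} |h(r_0)|^2 + \int_{r_0}^{r_1} r^{q-1} |h(r)|^2 \, dr \leq \frac{4}{q^2} \int_{r_0}^{r_1} r^{q+1} |h'(r)|^2 \, dr + \frac{2}{q} D_0$. -/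
/-! The derivative of `r ^ q * h r ^ 2` is `q r^(q-1) h² + 2 r^q h h'`, and completing the
square `(q/2) r^(q-1) h² + (2/q) r^(q+1) h'² + 2 r^q h h' = (2 r^q / (q r)) (q h / 2 + r h')² ≥ 0`
bounds it below by `(q/2) r^(q-1) h² - (2/q) r^(q+1) h'²`. Integrating over `[r₀, r₁]` and
bounding the boundary term at `r₁` by `D₀` gives the inequality after multiplying by `2/q`. -/

open Set intervalIntegral

section

variable {q r : ℝ}

theorem hasDerivAt_rpow_mul_sq {h : ℝ → ℝ} {h'r : ℝ} (hr : 0 < r)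
    (hh : HasDerivAt h h'r r) :
    HasDerivAt (fun s => s ^ q * h s ^ 2)
      (q * (r ^ (q - 1) * h r ^ 2) + 2 * (r ^ q * (h r * h'r))) r := by
  have hsq : HasDerivAt (fun s => h s ^ 2) (2 * h r ^ 1 * h'r) r := hh.pow 2
  exact ((Real.hasDerivAt_rpow_const (p := q) (Or.inl hr.ne')).mul hsq).congr_deriv (by ring)

theorem half_mul_rpow_sub_le_deriv_rpow_mul_sq (hq : 0 < q) (hr : 0 < r) (x y : ℝ) :
    q / 2 * (r ^ (q - 1) * x ^ 2) - 2 / q * (r ^ (q + 1) * y ^ 2)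
      ≤ q * (r ^ (q - 1) * x ^ 2) + 2 * (r ^ q * (x * y)) := by
  have hsquare :
      q / 2 * (r ^ (q - 1) * x ^ 2) + 2 / q * (r ^ (q + 1) * y ^ 2) + 2 * (r ^ q * (x * y))
        = 2 * r ^ q / (q * r) * (q * x / 2 + r * y) ^ 2 := by
    rw [Real.rpow_sub_one hr.ne', Real.rpow_add_one hr.ne']
    field_simp
    ring
  have : 0 ≤ 2 * r ^ q / (q * r) * (q * x / 2 + r * y) ^ 2 := by positivity
  linarith

end

theorem half_mul_integral_sub_le_rpow_mul_sq_sub {q a b : ℝ} {h h' : ℝ → ℝ}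
    (hq : 0 < q) (ha : 0 < a) (hab : a ≤ b)
    (hderiv : ∀ r ∈ Icc a b, HasDerivAt h (h' r) r) (hcont : ContinuousOn h' (Icc a b)) :
    q / 2 * (∫ r in a..b, r ^ (q - 1) * h r ^ 2) - 2 / q * ∫ r in a..b, r ^ (q + 1) * h' r ^ 2
      ≤ b ^ q * h b ^ 2 - a ^ q * h a ^ 2 := by
  have hpos : ∀ r ∈ Icc a b, 0 < r := fun r hr => ha.trans_le hr.1
  have hrpow : ∀ p : ℝ, ContinuousOn (fun r : ℝ => r ^ p) (Icc a b) := fun p =>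
    continuousOn_id.rpow_const fun r hr => Or.inl (hpos r hr).ne'
  have hh : ContinuousOn h (Icc a b) := fun r hr => (hderiv r hr).continuousAt.continuousWithinAt
  have hintegrable :
      ∀ {f : ℝ → ℝ}, ContinuousOn f (Icc a b) → IntervalIntegrable f MeasureTheory.volume a b :=
    fun hf => (uIcc_of_le hab ▸ hf).intervalIntegrable
  have hI1 : IntervalIntegrable (fun r => r ^ (q - 1) * h r ^ 2) MeasureTheory.volume a b :=
    hintegrable (by fun_prop)
  have hI3 : IntervalIntegrable (fun r => r ^ (q + 1) * h' r ^ 2) MeasureTheory.volume a b :=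
    hintegrable (by fun_prop)
  have hF' : IntervalIntegrable
      (fun r => q * (r ^ (q - 1) * h r ^ 2) + 2 * (r ^ q * (h r * h' r)))
      MeasureTheory.volume a b :=
    hintegrable (by fun_prop)
  rw [← integral_const_mul, ← integral_const_mul,
    ← integral_sub (hI1.const_mul _) (hI3.const_mul _),
    ← integral_eq_sub_of_hasDerivAt (fun r hr => hasDerivAt_rpow_mul_sq
      (hpos r (uIcc_of_le hab ▸ hr)) (hderiv r (uIcc_of_le hab ▸ hr))) hF']
  exact integral_mono_on hab ((hI1.const_mul _).sub (hI3.const_mul _)) hF'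
    fun r hr => half_mul_rpow_sub_le_deriv_rpow_mul_sq hq (hpos r hr) _ _

/-- Hardy inequality on an interval, boundary term at the right endpoint (Lemma 3.1 ii). -/
theorem hardy_inequality_right (q r0 r1 D0 : ℝ) (h h' : ℝ → ℝ)
    (hq : 0 < q) (hr0 : 0 < r0) (hr01 : r0 < r1)
    (hderiv : ∀ r ∈ Set.Icc r0 r1, HasDerivAt h (h' r) r)
    (hcont : ContinuousOn h' (Set.Icc r0 r1))
    (hD0 : r1 ^ q * |h r1| ^ 2 ≤ D0) :
    (2 / q) * (r0 ^ q * |h r0| ^ 2) + ∫ r in r0..r1, r ^ (q - 1) * |h r| ^ 2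
      ≤ (4 / q ^ 2) * (∫ r in r0..r1, r ^ (q + 1) * |h' r| ^ 2) + (2 / q) * D0 := by
  simp only [sq_abs] at hD0 ⊢
  have key := half_mul_integral_sub_le_rpow_mul_sq_sub hq hr0 hr01.le hderiv hcont
  set I1 := ∫ r in r0..r1, r ^ (q - 1) * h r ^ 2
  set I3 := ∫ r in r0..r1, r ^ (q + 1) * h' r ^ 2
  rw [← sub_nonneg]
  have hrescale : 4 / q ^ 2 * I3 + 2 / q * D0 - (2 / q * (r0 ^ q * h r0 ^ 2) + I1)
      = 2 / q * (D0 - r0 ^ q * h r0 ^ 2 - (q / 2 * I1 - 2 / q * I3)) := by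
    field_simp
    ring
  rw [hrescale]
  exact mul_nonneg (by positivity) (by linarith)
end

section
/- Let $p_1 \leq p_2 - 1$ be reals, $D \geq 0$, $\tau_0 \geq 1$, and let $F : [p_1, p_2] \times [\tau_0, \infty) \to [0, \infty)$ be measurable in $\tau$, monotone nondecreasing in $p$, satisfying the interpolation bound $F(p, \tau) \leq C F(p', \tau)^{(p''-p)/(p''-p')} F(p'', \tau)^{(p-p')/(p''-p')}$ for $p_1 \leq p' \leq p \leq p'' \leq p_2$, and satisfying for all $p \in [p_1, p_2]$ and $\tau_2 > \tau_1 \geq \tau_0$ the integrated inequality $F(p, \tau_2) + \int_{\tau_1}^{\tau_2} F(p-1, \tau) \, d\tau \leq C (F(p, \tau_1) + \tau_1^{p - p_2} D)$. Then there exists a constant $C' = C'(C, p_1, p_2) > 0$ such that for all $p \in [p_1, p_2]$ and all $\tau_2 > \tau_1 \geq \tau_0$, $F(p, \tau_2) \leq C' \langle \tau_2 - \tau_1 \rangle^{p - p_2} (F(p_2, \tau_1) + D)$, where $\langle x \rangle = \sqrt{1 + x^2}$. -/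
open MeasureTheory

/-- The Japanese bracket `⟨x⟩ = √(1+x²)`. -/
noncomputable def hidJ (x : ℝ) : ℝ := Real.sqrt (1 + x ^ 2)

lemma hidJ_pos (x : ℝ) : 0 < hidJ x :=
  Real.sqrt_pos.mpr (by nlinarith [sq_nonneg x])

lemma one_le_hidJ (x : ℝ) : 1 ≤ hidJ x := by
  rw [hidJ, Real.one_le_sqrt] <;> nlinarith [sq_nonneg x]

lemma le_hidJ (x : ℝ) : x ≤ hidJ x := by
  rw [hidJ]
  have h := Real.sq_sqrt (by positivity : (0:ℝ) ≤ 1 + x^2)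
  have h2 := Real.sqrt_nonneg (1 + x^2)
  nlinarith [sq_nonneg (x - Real.sqrt (1 + x^2))]

lemma hidJ_le (x : ℝ) (hx : 0 ≤ x) : hidJ x ≤ 1 + x := by
  rw [hidJ, show (1:ℝ) + x = Real.sqrt ((1+x)^2) from (Real.sqrt_sq (by linarith)).symm]
  exact Real.sqrt_le_sqrt (by nlinarith)

lemma hidJ_div3 (x : ℝ) : hidJ x ≤ Real.sqrt 18 * hidJ (x/3) := by
  rw [hidJ, hidJ, ← Real.sqrt_mul (by norm_num : (0:ℝ) ≤ 18)]
  apply Real.sqrt_le_sqrt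
  nlinarith [sq_nonneg x]

/-- Bundle of the hypotheses of the hierarchy lemma. -/
structure HidHyp (p1 p2 τ0 C D : ℝ) (F : ℝ → ℝ → ℝ) : Prop where
  meas : ∀ p, Measurable (F p)
  nonneg : ∀ p τ, 0 ≤ F p τ
  mono : ∀ p p', p1 ≤ p → p ≤ p' → p' ≤ p2 → ∀ τ, τ0 ≤ τ → F p τ ≤ F p' τ
  interp : ∀ p' p p'', p1 ≤ p' → p' ≤ p → p ≤ p'' → p'' ≤ p2 → p' < p'' → ∀ τ, τ0 ≤ τ →
    F p τ ≤ C * F p' τ ^ ((p'' - p) / (p'' - p')) * F p'' τ ^ ((p - p') / (p'' - p'))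
  ie : ∀ p, p1 ≤ p → p ≤ p2 → ∀ τ1 τ2, τ0 ≤ τ1 → τ1 < τ2 →
    F p τ2 + ∫ τ in τ1..τ2, F (p - 1) τ ≤ C * (F p τ1 + τ1 ^ (p - p2) * D)

/-- `x^θ ≤ max 1 x` for `θ ∈ [0,1]`. -/
lemma hid_rpow_le_max {x θ : ℝ} (hx : 0 < x) (h0 : 0 ≤ θ) (h1 : θ ≤ 1) :
    x ^ θ ≤ max 1 x := by
  rcases le_total 1 x with h | h
  · calc x ^ θ ≤ x ^ (1:ℝ) := Real.rpow_le_rpow_of_exponent_le h h1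
    _ = x := Real.rpow_one x
    _ ≤ max 1 x := le_max_right _ _
  · calc x ^ θ ≤ x ^ (0:ℝ) := Real.rpow_le_rpow_of_exponent_ge hx h h0
    _ = 1 := Real.rpow_zero x
    _ ≤ max 1 x := le_max_left _ _

section Main

variable {p1 p2 τ0 C D : ℝ} {F : ℝ → ℝ → ℝ}

/-- Crude bound coming directly from the integrated energy inequality. -/
lemma hid_crude (hp : p1 ≤ p2 - 1) (hτ0 : 1 ≤ τ0) (hC : 0 < C) (hD : 0 ≤ D)
    (H : HidHyp p1 p2 τ0 C D F) (p : ℝ) (hp1 : p1 ≤ p) (hp2 : p ≤ p2)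
    (τ1 τ2 : ℝ) (h1 : τ0 ≤ τ1) (h2 : τ1 < τ2) :
    F p τ2 ≤ C * (F p2 τ1 + D) := by
  have hie := H.ie p hp1 hp2 τ1 τ2 h1 h2
  have hint : 0 ≤ ∫ τ in τ1..τ2, F (p - 1) τ :=
    intervalIntegral.integral_nonneg h2.le (fun τ _ => H.nonneg _ _)
  have hτ11 : (1:ℝ) ≤ τ1 := hτ0.trans h1
  have h4 : τ1 ^ (p - p2) ≤ 1 := Real.rpow_le_one_of_one_le_of_nonpos hτ11 (by linarith)
  have h5 : F p τ1 ≤ F p2 τ1 := H.mono p p2 hp1 hp2 le_rfl τ1 h1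
  have h6 : τ1 ^ (p - p2) * D ≤ D := by
    calc τ1 ^ (p - p2) * D ≤ 1 * D := mul_le_mul_of_nonneg_right h4 hD
    _ = D := one_mul D
  have h3 : F p τ2 ≤ C * (F p τ1 + τ1 ^ (p - p2) * D) := by linarith
  calc F p τ2 ≤ C * (F p τ1 + τ1 ^ (p - p2) * D) := h3
  _ ≤ C * (F p2 τ1 + D) := mul_le_mul_of_nonneg_left (by linarith) hC.le

/-- The pigeonhole step: a decay estimate at weight `p+1` implies one at weight `p`,
with one extra power of decay. -/
lemma hid_step (hp : p1 ≤ p2 - 1) (hτ0 : 1 ≤ τ0) (hC : 0 < C) (hD : 0 ≤ D)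
    (H : HidHyp p1 p2 τ0 C D F) (p : ℝ) (hp1 : p1 ≤ p) (hpp : p ≤ p2 - 1)
    (K : ℝ) (hK : 0 < K)
    (Hq : ∀ σ τ, τ0 ≤ σ → σ < τ →
      F (p+1) τ ≤ K * hidJ (τ - σ) ^ (p + 1 - p2) * (F p2 σ + D)) :
    ∀ τ1 τ2, τ0 ≤ τ1 → τ1 < τ2 →
      F p τ2 ≤ (C * (6*C*(K+1) + 1) * Real.sqrt 18 ^ (p2 - p1)) *
        hidJ (τ2 - τ1) ^ (p - p2) * (F p2 τ1 + D) := by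
  intro τ1 τ2 hτ1 h12
  have hp12 : (0:ℝ) ≤ p2 - p1 := by linarith
  have hpe : p - p2 ≤ 0 := by linarith
  have h18 : (1:ℝ) ≤ Real.sqrt 18 := by
    rw [Real.one_le_sqrt] <;> norm_num
  have h18pos : (0:ℝ) < Real.sqrt 18 ^ (p2 - p1) := Real.rpow_pos_of_pos (by linarith) _
  set SC := C * (6*C*(K+1) + 1) * Real.sqrt 18 ^ (p2 - p1) with hSC
  have hK1 : (1:ℝ) ≤ 6*C*(K+1) + 1 := by nlinarith
  have hSCpos : 0 < SC := mul_pos (mul_pos hC (by linarith)) h18pos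
  set M := F p2 τ1 + D with hMdef
  have hM0 : 0 ≤ M := add_nonneg (H.nonneg _ _) hD
  set G := hidJ (τ2 - τ1) with hGdef
  have hGpos : 0 < G := hidJ_pos _
  have hG1 : 1 ≤ G := one_le_hidJ _
  have hGe : 0 < G ^ (p - p2) := Real.rpow_pos_of_pos hGpos _
  have hcrude : F p τ2 ≤ C * M := hid_crude hp hτ0 hC hD H p hp1 (by linarith) τ1 τ2 hτ1 h12
  rcases eq_or_lt_of_le hM0 with hMz | hMpos
  · -- M = 0
    have hMz' : M = 0 := hMz.symm
    rw [hMz', mul_zero]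
    rw [hMz', mul_zero] at hcrude
    exact hcrude
  rcases le_or_gt (τ2 - τ1) 3 with hΔ3 | hΔ3
  · -- short time interval: crude bound suffices
    have hΔ0 : 0 < τ2 - τ1 := by linarith
    have hG10 : G ≤ Real.sqrt 10 := by
      rw [hGdef, hidJ]
      exact Real.sqrt_le_sqrt (by nlinarith)
    have h10 : (1:ℝ) ≤ Real.sqrt 10 := by
      rw [Real.one_le_sqrt] <;> norm_num
    have key : Real.sqrt 10 ^ (p1 - p2) ≤ G ^ (p - p2) := by
      calc Real.sqrt 10 ^ (p1 - p2) ≤ G ^ (p1 - p2) :=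
        Real.rpow_le_rpow_of_nonpos hGpos hG10 (by linarith)
      _ ≤ G ^ (p - p2) := Real.rpow_le_rpow_of_exponent_le hG1 (by linarith)
    have key2 : Real.sqrt 10 ^ (p2 - p1) ≤ Real.sqrt 18 ^ (p2 - p1) := by
      apply Real.rpow_le_rpow (by linarith) _ hp12
      exact Real.sqrt_le_sqrt (by norm_num)
    have key3 : (1:ℝ) ≤ Real.sqrt 10 ^ (p2 - p1) * Real.sqrt 10 ^ (p1 - p2) := by
      rw [← Real.rpow_add (by linarith : (0:ℝ) < Real.sqrt 10)]
      rw [show p2 - p1 + (p1 - p2) = 0 by ring, Real.rpow_zero]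
    have h10pos : (0:ℝ) < Real.sqrt 10 ^ (p1 - p2) := Real.rpow_pos_of_pos (by linarith) _
    have hCle : C ≤ SC * G ^ (p - p2) := by
      have s1 : C * 1 ≤ C * (Real.sqrt 10 ^ (p2 - p1) * Real.sqrt 10 ^ (p1 - p2)) :=
        mul_le_mul_of_nonneg_left key3 hC.le
      have i1 : Real.sqrt 10 ^ (p2 - p1) ≤ (6*C*(K+1) + 1) * Real.sqrt 18 ^ (p2 - p1) := by
        calc Real.sqrt 10 ^ (p2 - p1) ≤ Real.sqrt 18 ^ (p2 - p1) := key2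
        _ ≤ (6*C*(K+1) + 1) * Real.sqrt 18 ^ (p2 - p1) := le_mul_of_one_le_left h18pos.le hK1
      have s2 : C * (Real.sqrt 10 ^ (p2 - p1) * Real.sqrt 10 ^ (p1 - p2))
          ≤ C * ((6*C*(K+1) + 1) * Real.sqrt 18 ^ (p2 - p1) * G ^ (p - p2)) :=
        mul_le_mul_of_nonneg_left
          (mul_le_mul i1 key h10pos.le (mul_nonneg (by linarith) h18pos.le)) hC.le
      calc C = C * 1 := (mul_one C).symm
      _ ≤ C * ((6*C*(K+1) + 1) * Real.sqrt 18 ^ (p2 - p1) * G ^ (p - p2)) := s1.trans s2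
      _ = SC * G ^ (p - p2) := by rw [hSC]; ring
    calc F p τ2 ≤ C * M := hcrude
    _ ≤ (SC * G ^ (p - p2)) * M := mul_le_mul_of_nonneg_right hCle hM0
  · -- long time interval: pigeonhole argument
    have hΔpos : (0:ℝ) < τ2 - τ1 := by linarith
    set s := (τ2 - τ1) / 3 with hsdef
    have hs1 : 1 < s := by rw [hsdef]; linarith
    have hspos : 0 < s := by linarith
    set τa := τ1 + s with hτadef
    set τb := τ1 + 2*s with hτbdef
    have hab : τa < τb := by rw [hτadef, hτbdef]; linarith
    have hτa0 : τ0 ≤ τa := by rw [hτadef]; linarith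
    have hbτ2 : τb < τ2 := by rw [hτbdef, hsdef]; linarith
    set g := hidJ s with hgdef
    have hgpos : 0 < g := hidJ_pos _
    have hg1 : 1 ≤ g := one_le_hidJ _
    have hsg : s ≤ g := le_hidJ _
    have hgs : g ≤ 1 + s := hidJ_le _ hspos.le
    have hgΔ : g ≤ τ2 - τ1 := by
      calc g ≤ 1 + s := hgs
      _ ≤ τ2 - τ1 := by rw [hsdef]; linarith
    have hτag : g ≤ τa := by
      have : (1:ℝ) ≤ τ1 := hτ0.trans hτ1
      rw [hτadef]; linarith
    have hq1 : p1 ≤ p + 1 := by linarith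
    have hq2 : p + 1 ≤ p2 := by linarith
    -- pointwise bound on [τa, τb]
    have hbd : ∀ τ, τa ≤ τ → F p τ ≤ C * M := by
      intro τ hτ
      exact hid_crude hp hτ0 hC hD H p hp1 (by linarith) τ1 τ hτ1
        (by rw [hτadef] at hτ; linarith)
    -- integrability on [τa, τb]
    have hInt : IntervalIntegrable (F p) volume τa τb := by
      have h1 : IntegrableOn (F p) (Set.Icc τa τb) volume := by
        apply Measure.integrableOn_of_bounded (M := C * M)
        · exact (measure_Icc_lt_top).ne
        · exact (H.meas p).aestronglyMeasurable
        · filter_upwards [ae_restrict_mem measurableSet_Icc] with τ hτ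
          rw [Real.norm_eq_abs, abs_of_nonneg (H.nonneg _ _)]
          exact hbd τ hτ.1
      apply MeasureTheory.IntegrableOn.intervalIntegrable
      rwa [Set.uIcc_of_le hab.le]
    -- energy inequality at weight p+1 on [τa, τb]
    have hie := H.ie (p+1) hq1 hq2 τa τb hτa0 hab
    rw [add_sub_cancel_right] at hie
    have hFb : 0 ≤ F (p+1) τb := H.nonneg _ _
    have hFqa : F (p+1) τa ≤ K * g ^ (p + 1 - p2) * M := by
      have h := Hq τ1 τa hτ1 (by rw [hτadef]; linarith)
      rwa [show τa - τ1 = s by rw [hτadef]; ring, ← hgdef, ← hMdef] at h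
    have hgq : 0 < g ^ (p + 1 - p2) := Real.rpow_pos_of_pos hgpos _
    have hτaexp : τa ^ (p + 1 - p2) ≤ g ^ (p + 1 - p2) :=
      Real.rpow_le_rpow_of_nonpos hgpos hτag (by linarith)
    have hDM : D ≤ M := by rw [hMdef]; linarith [H.nonneg p2 τ1]
    set B := C * (K+1) * g ^ (p + 1 - p2) * M with hBdef
    have hBpos : 0 < B :=
      mul_pos (mul_pos (mul_pos hC (by linarith)) hgq) hMpos
    have hintB : (∫ τ in τa..τb, F p τ) ≤ B := by
      have h2 : (∫ τ in τa..τb, F p τ) ≤ C * (F (p+1) τa + τa ^ (p + 1 - p2) * D) := by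
        linarith
      calc (∫ τ in τa..τb, F p τ)
          ≤ C * (F (p+1) τa + τa ^ (p + 1 - p2) * D) := h2
      _ ≤ C * (K * g ^ (p + 1 - p2) * M + g ^ (p + 1 - p2) * M) :=
        mul_le_mul_of_nonneg_left
          (add_le_add hFqa (mul_le_mul hτaexp hDM hD hgq.le)) hC.le
      _ = B := by rw [hBdef]; ring
    -- pigeonhole
    have hpig : ∃ τ', τ' ∈ Set.Ioo τa τb ∧ F p τ' ≤ 2*B/s := by
      by_contra hcon
      push_neg at hcon
      have hconst : IntervalIntegrable (fun _ : ℝ => 2*B/s) volume τa τb :=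
        intervalIntegrable_const
      have hpair : ∀ᵐ τ ∂(volume : Measure ℝ), τ ∉ ({τa, τb} : Set ℝ) := by
        have hz : (volume : Measure ℝ) ({τa, τb} : Set ℝ) = 0 :=
          ((Set.finite_singleton τb).insert τa).measure_zero _
        exact measure_eq_zero_iff_ae_notMem.mp hz
      have hae : (fun _ : ℝ => 2*B/s) ≤ᵐ[volume.restrict (Set.Icc τa τb)] F p := by
        filter_upwards [ae_restrict_mem measurableSet_Icc, ae_restrict_of_ae hpair]
          with τ h1 h2
        have hmem : τ ∈ Set.Ioo τa τb := by
          constructor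
          · rcases lt_or_eq_of_le h1.1 with h | h
            · exact h
            · exact absurd (by rw [← h]; simp) h2
          · rcases lt_or_eq_of_le h1.2 with h | h
            · exact h
            · exact absurd (by rw [h]; simp) h2
        exact (hcon τ hmem).le
      have hmono := intervalIntegral.integral_mono_ae_restrict hab.le hconst hInt hae
      rw [intervalIntegral.integral_const, smul_eq_mul] at hmono
      have hba : τb - τa = s := by rw [hτadef, hτbdef]; ring
      rw [hba] at hmono
      have hss : s * (2*B/s) = 2*B := by field_simp
      rw [hss] at hmono
      linarith
    obtain ⟨τ', hτ'mem, hτ'le⟩ := hpig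
    -- energy inequality at weight p on [τ', τ2]
    have hτ'0 : τ0 ≤ τ' := hτa0.trans hτ'mem.1.le
    have hie2 := H.ie p hp1 (by linarith) τ' τ2 hτ'0 (hτ'mem.2.trans hbτ2)
    have hint2 : 0 ≤ ∫ τ in τ'..τ2, F (p - 1) τ :=
      intervalIntegral.integral_nonneg (hτ'mem.2.trans hbτ2).le (fun τ _ => H.nonneg _ _)
    have hτ'exp : τ' ^ (p - p2) ≤ g ^ (p - p2) :=
      Real.rpow_le_rpow_of_nonpos hgpos (hτag.trans hτ'mem.1.le) hpe
    have hge0 : 0 < g ^ (p - p2) := Real.rpow_pos_of_pos hgpos _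
    have hkey : F p τ2 ≤ C * (2*B/s + g ^ (p - p2) * M) := by
      have h3 : F p τ2 ≤ C * (F p τ' + τ' ^ (p - p2) * D) := by linarith
      calc F p τ2 ≤ C * (F p τ' + τ' ^ (p - p2) * D) := h3
      _ ≤ C * (2*B/s + g ^ (p - p2) * M) :=
        mul_le_mul_of_nonneg_left
          (add_le_add hτ'le (mul_le_mul hτ'exp hDM hD hge0.le)) hC.le
    -- bound 2B/s
    have hgsplit : g ^ (p + 1 - p2) = g ^ (p - p2) * g := by
      rw [show p + 1 - p2 = (p - p2) + 1 by ring, Real.rpow_add_one hgpos.ne']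
    have h2B : 2*B/s ≤ 6*C*(K+1) * g ^ (p - p2) * M := by
      rw [div_le_iff₀ hspos]
      have hg3s : g ≤ 3*s := by
        calc g ≤ τ2 - τ1 := hgΔ
        _ = 3*s := by rw [hsdef]; ring
      have c2 : (0:ℝ) ≤ 2*(C*(K+1)) :=
        mul_nonneg (by norm_num) (mul_nonneg hC.le (by linarith))
      have c1 : (0:ℝ) ≤ 2*(C*(K+1)) * g ^ (p - p2) * M :=
        mul_nonneg (mul_nonneg c2 hge0.le) hM0
      have e1 : 2*B = (2*(C*(K+1)) * g ^ (p - p2) * M) * g := by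
        rw [hBdef, hgsplit]; ring
      rw [e1]
      calc (2*(C*(K+1)) * g ^ (p - p2) * M) * g
          ≤ (2*(C*(K+1)) * g ^ (p - p2) * M) * (3*s) :=
        mul_le_mul_of_nonneg_left hg3s c1
      _ = 6*C*(K+1) * g ^ (p - p2) * M * s := by ring
    have hstep1 : F p τ2 ≤ C * (6*C*(K+1) + 1) * g ^ (p - p2) * M := by
      calc F p τ2 ≤ C * (2*B/s + g ^ (p - p2) * M) := hkey
      _ ≤ C * (6*C*(K+1) * g ^ (p - p2) * M + g ^ (p - p2) * M) :=
        mul_le_mul_of_nonneg_left (by linarith) hC.le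
      _ = C * (6*C*(K+1) + 1) * g ^ (p - p2) * M := by ring
    -- compare g and G
    have hGg : G ≤ Real.sqrt 18 * g := by
      rw [hGdef, hgdef, hsdef]
      exact hidJ_div3 _
    have h18pos' : (0:ℝ) < Real.sqrt 18 := by linarith
    have hdivpos : 0 < G / Real.sqrt 18 := div_pos hGpos h18pos'
    have hdivle : G / Real.sqrt 18 ≤ g := by
      rw [div_le_iff₀ h18pos']
      calc G ≤ Real.sqrt 18 * g := hGg
      _ = g * Real.sqrt 18 := mul_comm _ _
    have hgG : g ^ (p - p2) ≤ Real.sqrt 18 ^ (p2 - p1) * G ^ (p - p2) := by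
      calc g ^ (p - p2) ≤ (G / Real.sqrt 18) ^ (p - p2) :=
        Real.rpow_le_rpow_of_nonpos hdivpos hdivle hpe
      _ = G ^ (p - p2) / Real.sqrt 18 ^ (p - p2) :=
        Real.div_rpow hGpos.le h18pos'.le _
      _ = G ^ (p - p2) * Real.sqrt 18 ^ (-(p - p2)) := by
        rw [Real.rpow_neg h18pos'.le, div_eq_mul_inv]
      _ ≤ G ^ (p - p2) * Real.sqrt 18 ^ (p2 - p1) :=
        mul_le_mul_of_nonneg_left
          (Real.rpow_le_rpow_of_exponent_le h18 (by linarith)) hGe.le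
      _ = Real.sqrt 18 ^ (p2 - p1) * G ^ (p - p2) := mul_comm _ _
    calc F p τ2 ≤ C * (6*C*(K+1) + 1) * g ^ (p - p2) * M := hstep1
    _ ≤ C * (6*C*(K+1) + 1) * (Real.sqrt 18 ^ (p2 - p1) * G ^ (p - p2)) * M :=
      mul_le_mul_of_nonneg_right
        (mul_le_mul_of_nonneg_left hgG (mul_pos hC (by linarith)).le) hM0
    _ = SC * G ^ (p - p2) * M := by rw [hSC]; ring

/-- The decay hierarchy, by induction on the number of unit steps below `p2`. -/
lemma hid_aux (p1 p2 τ0 C : ℝ) (hp : p1 ≤ p2 - 1) (hτ0 : 1 ≤ τ0) (hC : 0 < C) :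
    ∀ n : ℕ, ∃ K, 0 < K ∧ ∀ D : ℝ, 0 ≤ D → ∀ F : ℝ → ℝ → ℝ, HidHyp p1 p2 τ0 C D F →
      ∀ p, p1 ≤ p → p ≤ p2 → p2 - p ≤ n + 1 →
      ∀ τ1 τ2, τ0 ≤ τ1 → τ1 < τ2 →
        F p τ2 ≤ K * hidJ (τ2 - τ1) ^ (p - p2) * (F p2 τ1 + D) := by
  have h18 : (1:ℝ) ≤ Real.sqrt 18 := by
    rw [Real.one_le_sqrt] <;> norm_num
  have hp12 : (0:ℝ) ≤ p2 - p1 := by linarith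
  have h18pos : (0:ℝ) < Real.sqrt 18 ^ (p2 - p1) := Real.rpow_pos_of_pos (by linarith) _
  intro n
  induction n with
  | zero =>
    -- base case : p2 - 1 ≤ p ≤ p2
    set K1 := C * (6*C*(C+1) + 1) * Real.sqrt 18 ^ (p2 - p1) with hK1def
    have hK1pos : 0 < K1 :=
      mul_pos (mul_pos hC (by nlinarith)) h18pos
    refine ⟨C + K1 + C * max 1 K1 * max 1 C, ?_, ?_⟩
    · have : 0 < C * max 1 K1 * max 1 C := by positivity
      linarith
    intro D hD F H p hp1 hp2 hpn τ1 τ2 hτ1 h12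
    push_cast at hpn
    set G := hidJ (τ2 - τ1) with hGdef
    have hGpos : 0 < G := hidJ_pos _
    have hG1 : 1 ≤ G := one_le_hidJ _
    have hGe : 0 < G ^ (p - p2) := Real.rpow_pos_of_pos hGpos _
    have hmax1 : (0:ℝ) < C * max 1 K1 * max 1 C := by positivity
    have hM0 : 0 ≤ F p2 τ1 + D := add_nonneg (H.nonneg _ _) hD
    -- claim at exact weight p2
    have claim2 : ∀ σ τ, τ0 ≤ σ → σ < τ →
        F p2 τ ≤ C * hidJ (τ - σ) ^ (p2 - p2) * (F p2 σ + D) := by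
      intro σ τ hσ hστ
      rw [show p2 - p2 = 0 by ring, Real.rpow_zero, mul_one]
      exact hid_crude hp hτ0 hC hD H p2 (by linarith) le_rfl σ τ hσ hστ
    -- claim at exact weight p2 - 1
    have claim1 : ∀ σ τ, τ0 ≤ σ → σ < τ →
        F (p2-1) τ ≤ K1 * hidJ (τ - σ) ^ ((p2-1) - p2) * (F p2 σ + D) := by
      rw [hK1def]
      apply hid_step hp hτ0 hC hD H (p2-1) hp le_rfl C hC
      intro σ τ hσ hστ
      rw [show p2 - 1 + 1 = p2 by ring]
      exact claim2 σ τ hσ hστ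
    rcases eq_or_lt_of_le hp2 with hpeq | hplt
    · -- p = p2
      have hc := claim2 τ1 τ2 hτ1 h12
      rw [← hGdef] at hc
      have hd : F p τ2 ≤ C * G ^ (p - p2) * (F p2 τ1 + D) := by
        rw [hpeq]; exact hc
      calc F p τ2 ≤ C * G ^ (p - p2) * (F p2 τ1 + D) := hd
      _ ≤ (C + K1 + C * max 1 K1 * max 1 C) * G ^ (p - p2) * (F p2 τ1 + D) :=
        mul_le_mul_of_nonneg_right
          (mul_le_mul_of_nonneg_right (by linarith) hGe.le) hM0
    rcases eq_or_lt_of_le (show p2 - 1 ≤ p by linarith) with hpeq1 | hplt1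
    · -- p = p2 - 1
      have hc := claim1 τ1 τ2 hτ1 h12
      rw [← hGdef] at hc
      have hd : F p τ2 ≤ K1 * G ^ (p - p2) * (F p2 τ1 + D) := by
        rw [← hpeq1]; exact hc
      calc F p τ2 ≤ K1 * G ^ (p - p2) * (F p2 τ1 + D) := hd
      _ ≤ (C + K1 + C * max 1 K1 * max 1 C) * G ^ (p - p2) * (F p2 τ1 + D) :=
        mul_le_mul_of_nonneg_right
          (mul_le_mul_of_nonneg_right (by linarith) hGe.le) hM0
    -- p2 - 1 < p < p2 : interpolation
    rcases eq_or_lt_of_le hM0 with hMz | hMpos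
    · -- degenerate case M = 0
      have hcrude := hid_crude hp hτ0 hC hD H p hp1 hp2 τ1 τ2 hτ1 h12
      rw [← hMz, mul_zero] at hcrude
      rw [← hMz, mul_zero]
      exact hcrude
    set θ := p2 - p with hθdef
    have hθ0 : 0 < θ := by rw [hθdef]; linarith
    have hθ1 : θ < 1 := by rw [hθdef]; linarith
    have hτ2' : τ0 ≤ τ2 := hτ1.trans h12.le
    have hinterp := H.interp (p2-1) p p2 hp (by linarith) hp2 le_rfl (by linarith) τ2 hτ2'
    rw [show p2 - (p2-1) = 1 by ring, div_one, div_one] at hinterp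
    rw [show p - (p2-1) = 1 - θ by rw [hθdef]; ring] at hinterp
    set M := F p2 τ1 + D with hMdef
    have hAn : 0 ≤ F (p2-1) τ2 := H.nonneg _ _
    have hBn : 0 ≤ F p2 τ2 := H.nonneg _ _
    have hA : F (p2-1) τ2 ≤ K1 * G ^ ((p2-1) - p2) * M := by
      have := claim1 τ1 τ2 hτ1 h12
      rwa [← hGdef, ← hMdef] at this
    have hB : F p2 τ2 ≤ C * M := by
      have := claim2 τ1 τ2 hτ1 h12
      rw [← hGdef, ← hMdef] at this
      rwa [show p2 - p2 = 0 by ring, Real.rpow_zero, mul_one] at this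
    have h1 : F (p2-1) τ2 ^ θ ≤ (K1 * G ^ ((p2-1) - p2) * M) ^ θ :=
      Real.rpow_le_rpow hAn hA hθ0.le
    have h2 : F p2 τ2 ^ (1-θ) ≤ (C * M) ^ (1-θ) :=
      Real.rpow_le_rpow hBn hB (by linarith)
    have he1 : (K1 * G ^ ((p2-1) - p2) * M) ^ θ
        = K1 ^ θ * G ^ (p - p2) * M ^ θ := by
      rw [Real.mul_rpow (mul_nonneg hK1pos.le (Real.rpow_nonneg hGpos.le _)) hMpos.le,
        Real.mul_rpow hK1pos.le (Real.rpow_nonneg hGpos.le _),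
        ← Real.rpow_mul hGpos.le,
        show ((p2-1) - p2) * θ = p - p2 by rw [hθdef]; ring]
    have he2 : (C * M) ^ (1-θ) = C ^ (1-θ) * M ^ (1-θ) :=
      Real.mul_rpow hC.le hMpos.le
    have hMM : M ^ θ * M ^ (1-θ) = M := by
      rw [← Real.rpow_add hMpos, show θ + (1-θ) = 1 by ring, Real.rpow_one]
    have h3 : F p τ2 ≤ C * ((K1 * G ^ ((p2-1) - p2) * M) ^ θ * (C * M) ^ (1-θ)) := by
      calc F p τ2 ≤ C * F (p2-1) τ2 ^ θ * F p2 τ2 ^ (1-θ) := hinterp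
      _ ≤ C * (K1 * G ^ ((p2-1) - p2) * M) ^ θ * (C * M) ^ (1-θ) := by
        apply mul_le_mul (mul_le_mul le_rfl h1 (Real.rpow_nonneg hAn θ) hC.le) h2
          (Real.rpow_nonneg hBn _) (by positivity)
      _ = C * ((K1 * G ^ ((p2-1) - p2) * M) ^ θ * (C * M) ^ (1-θ)) := by ring
    rw [he1, he2] at h3
    have h4 : C * (K1 ^ θ * G ^ (p - p2) * M ^ θ * (C ^ (1-θ) * M ^ (1-θ)))
        = C * (K1 ^ θ * C ^ (1-θ)) * G ^ (p - p2) * (M ^ θ * M ^ (1-θ)) := by ring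
    rw [h4, hMM] at h3
    have h5 : K1 ^ θ ≤ max 1 K1 := hid_rpow_le_max hK1pos hθ0.le hθ1.le
    have h6 : C ^ (1-θ) ≤ max 1 C := hid_rpow_le_max hC (by linarith) (by linarith)
    have hmm : K1 ^ θ * C ^ (1-θ) ≤ max 1 K1 * max 1 C :=
      mul_le_mul h5 h6 (Real.rpow_nonneg hC.le _)
        (le_trans zero_le_one (le_max_left 1 K1))
    have hc2 : C * (max 1 K1 * max 1 C) ≤ C + K1 + C * max 1 K1 * max 1 C := by
      have h7 : C * (max 1 K1 * max 1 C) = C * max 1 K1 * max 1 C := by ring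
      rw [h7]; linarith
    calc F p τ2 ≤ C * (K1 ^ θ * C ^ (1-θ)) * G ^ (p - p2) * M := h3
    _ ≤ C * (max 1 K1 * max 1 C) * G ^ (p - p2) * M :=
      mul_le_mul_of_nonneg_right
        (mul_le_mul_of_nonneg_right (mul_le_mul_of_nonneg_left hmm hC.le) hGe.le) hMpos.le
    _ ≤ (C + K1 + C * max 1 K1 * max 1 C) * G ^ (p - p2) * M :=
      mul_le_mul_of_nonneg_right (mul_le_mul_of_nonneg_right hc2 hGe.le) hMpos.le
  | succ n ih =>
    obtain ⟨K, hKpos, hKb⟩ := ih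
    set SC := C * (6*C*(K+1) + 1) * Real.sqrt 18 ^ (p2 - p1) with hSCdef
    have hSCpos : 0 < SC := mul_pos (mul_pos hC (by nlinarith)) h18pos
    refine ⟨SC + K, by linarith, ?_⟩
    intro D hD F H p hp1 hp2 hpn τ1 τ2 hτ1 h12
    push_cast at hpn
    have hGpos : 0 < hidJ (τ2 - τ1) := hidJ_pos _
    have hGe : 0 < hidJ (τ2 - τ1) ^ (p - p2) := Real.rpow_pos_of_pos hGpos _
    have hM0 : 0 ≤ F p2 τ1 + D := add_nonneg (H.nonneg _ _) hD
    by_cases hcase : p2 - p ≤ n + 1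
    · have hres := hKb D hD F H p hp1 hp2 hcase τ1 τ2 hτ1 h12
      calc F p τ2 ≤ K * hidJ (τ2 - τ1) ^ (p - p2) * (F p2 τ1 + D) := hres
      _ ≤ (SC + K) * hidJ (τ2 - τ1) ^ (p - p2) * (F p2 τ1 + D) :=
        mul_le_mul_of_nonneg_right
          (mul_le_mul_of_nonneg_right (by linarith) hGe.le) hM0
    · push_neg at hcase
      have hppp : p ≤ p2 - 1 := by
        have h1 : (0:ℝ) ≤ (n:ℝ) := Nat.cast_nonneg n
        linarith
      have Hq : ∀ σ τ, τ0 ≤ σ → σ < τ →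
          F (p+1) τ ≤ K * hidJ (τ - σ) ^ (p + 1 - p2) * (F p2 σ + D) := by
        intro σ τ hσ hστ
        exact hKb D hD F H (p+1) (by linarith) (by linarith) (by linarith) σ τ hσ hστ
      have hres := hid_step hp hτ0 hC hD H p hp1 hppp K hKpos Hq τ1 τ2 hτ1 h12
      calc F p τ2 ≤ SC * hidJ (τ2 - τ1) ^ (p - p2) * (F p2 τ1 + D) := hres
      _ ≤ (SC + K) * hidJ (τ2 - τ1) ^ (p - p2) * (F p2 τ1 + D) :=
        mul_le_mul_of_nonneg_right
          (mul_le_mul_of_nonneg_right (by linarith) hGe.le) hM0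

end Main

/-- A hierarchy of estimates implies decay (Lemma 3.5). -/
theorem hierarchy_implies_decay (p1 p2 τ0 C : ℝ)
    (hp : p1 ≤ p2 - 1) (hτ0 : 1 ≤ τ0) (hC : 0 < C) :
    ∃ C' > 0, ∀ (D : ℝ), 0 ≤ D → ∀ F : ℝ → ℝ → ℝ,
      (∀ p, Measurable (F p)) →
      (∀ p τ, 0 ≤ F p τ) →
      (∀ p τ, p < p1 → F p τ = 0) →
      (∀ p p', p1 ≤ p → p ≤ p' → p' ≤ p2 → ∀ τ, τ0 ≤ τ → F p τ ≤ F p' τ) →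
      (∀ p' p p'', p1 ≤ p' → p' ≤ p → p ≤ p'' → p'' ≤ p2 → p' < p'' → ∀ τ, τ0 ≤ τ →
        F p τ ≤ C * F p' τ ^ ((p'' - p) / (p'' - p')) * F p'' τ ^ ((p - p') / (p'' - p'))) →
      (∀ p, p1 ≤ p → p ≤ p2 → ∀ τ1 τ2, τ0 ≤ τ1 → τ1 < τ2 →
        F p τ2 + ∫ τ in τ1..τ2, F (p - 1) τ ≤ C * (F p τ1 + τ1 ^ (p - p2) * D)) →
      ∀ p, p1 ≤ p → p ≤ p2 → ∀ τ1 τ2, τ0 ≤ τ1 → τ1 < τ2 →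
        F p τ2 ≤ C' * Real.sqrt (1 + (τ2 - τ1) ^ 2) ^ (p - p2) * (F p2 τ1 + D) := by
  obtain ⟨K, hKpos, hKb⟩ := hid_aux p1 p2 τ0 C hp hτ0 hC (Nat.ceil (p2 - p1))
  refine ⟨K, hKpos, ?_⟩
  intro D hD F hmeas hnonneg _hzero hmono hinterp hie p hp1 hp2 τ1 τ2 hτ1 h12
  have H : HidHyp p1 p2 τ0 C D F := ⟨hmeas, hnonneg, hmono, hinterp, hie⟩
  have hn : p2 - p ≤ (Nat.ceil (p2 - p1) : ℝ) + 1 := by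
    have := Nat.le_ceil (p2 - p1)
    linarith
  have hres := hKb D hD F H p hp1 hp2 hn τ1 τ2 hτ1 h12
  simpa [hidJ] using hres
end

section
/- Let $t > 2$. Then $\int_{(t+1)/2}^{t} \frac{1}{\tau^3 (t - \tau)} \int_{|y| = t - \tau} |t - 2\tau|^{-3} \, d\sigma(y) \, d\tau \leq C t^{-2}$ for a universal constant $C$, where $d\sigma$ denotes the surface measure on the sphere $\{|y| = t - \tau\}$ in $\mathbb{R}^3$ (so the inner integral equals $4\pi (t-\tau)^2 |t-2\tau|^{-3}$). -/
/-!
On `[(t + 1) / 2, t]` the integrand equals `4π (t - τ) / τ³ · (2τ - t)⁻³`. As `τ ≥ t / 2`, the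
factor `(t - τ) / τ³` is at most `4 / t²`, and the lower limit keeps `2τ - t ≥ 1`, a unit margin
from the singularity at `τ = t / 2`, so `∫ (2τ - t)⁻³ dτ ≤ 1 / 4`. Hence the integral is at most
`4π / t²`.
-/
open Real Set intervalIntegral

lemma integral_rpow_neg_three_le {c b : ℝ} (hc : 0 < c) (hcb : c ≤ b) :
    ∫ u in c..b, u ^ (-3 : ℝ) ≤ 1 / (2 * c ^ 2) := by
  have hb : 0 ≤ b ^ (-2 : ℝ) := rpow_nonneg (hc.le.trans hcb) _
  have hc2 : c ^ (-2 : ℝ) = (c ^ 2)⁻¹ := by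
    rw [rpow_neg hc.le]; norm_cast
  rw [integral_rpow (Or.inr ⟨by norm_num, notMem_uIcc_of_lt hc (hc.trans_le hcb)⟩),
    show (-3 + 1 : ℝ) = -2 by norm_num, hc2]
  calc (b ^ (-2 : ℝ) - (c ^ 2)⁻¹) / -2 = 1 / (2 * c ^ 2) - b ^ (-2 : ℝ) / 2 := by ring
    _ ≤ 1 / (2 * c ^ 2) := by linarith

lemma integral_two_mul_sub_rpow_neg_three_le {t c : ℝ} (hc : 0 < c) (hct : c ≤ t) :
    ∫ τ in (t + c) / 2..t, (2 * τ - t) ^ (-3 : ℝ) ≤ 1 / (4 * c ^ 2) := by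
  rw [integral_comp_mul_sub (fun u => u ^ (-3 : ℝ)) two_ne_zero,
    show 2 * ((t + c) / 2) - t = c by ring, show 2 * t - t = t by ring, smul_eq_mul]
  calc 2⁻¹ * ∫ u in c..t, u ^ (-3 : ℝ) ≤ 2⁻¹ * (1 / (2 * c ^ 2)) := by
        gcongr; exact integral_rpow_neg_three_le hc hct
    _ = 1 / (4 * c ^ 2) := by ring

lemma sub_div_pow_three_le {t τ : ℝ} (ht : 0 < t) (hτ : t / 2 ≤ τ) :
    (t - τ) / τ ^ 3 ≤ 4 / t ^ 2 :=
  calc (t - τ) / τ ^ 3 ≤ (t / 2) / (t / 2) ^ 3 := by gcongr; linarith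
    _ = 4 / t ^ 2 := by field_simp; ring

lemma integral_sub_div_pow_three_mul_rpow_le {t c : ℝ} (hc : 0 < c) (hct : c ≤ t) :
    ∫ τ in (t + c) / 2..t, (t - τ) / τ ^ 3 * (2 * τ - t) ^ (-3 : ℝ) ≤ 1 / (c ^ 2 * t ^ 2) := by
  have hle : (t + c) / 2 ≤ t := by linarith
  have hlo : ∀ τ ∈ Icc ((t + c) / 2) t, 0 < 2 * τ - t ∧ t / 2 ≤ τ :=
    fun τ hτ => ⟨by linarith [hτ.1], by linarith [hτ.1]⟩
  have hcont_sing : ContinuousOn (fun τ => (2 * τ - t) ^ (-3 : ℝ)) (Icc ((t + c) / 2) t) :=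
    (continuous_const.mul continuous_id |>.sub continuous_const).continuousOn.rpow_const
      fun τ hτ => Or.inl (hlo τ hτ).1.ne'
  have hcont_frac : ContinuousOn (fun τ => (t - τ) / τ ^ 3) (Icc ((t + c) / 2) t) :=
    (continuousOn_const.sub continuousOn_id).div (continuousOn_id.pow 3)
      fun τ hτ => pow_ne_zero 3 (by linarith [(hlo τ hτ).2])
  calc _ ≤ ∫ τ in (t + c) / 2..t, 4 / t ^ 2 * (2 * τ - t) ^ (-3 : ℝ) := by
        exact integral_mono_on hle ((hcont_frac.mul hcont_sing).intervalIntegrable_of_Icc hle)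
          ((continuousOn_const.mul hcont_sing).intervalIntegrable_of_Icc hle) fun τ hτ =>
          mul_le_mul_of_nonneg_right (sub_div_pow_three_le (by linarith) (hlo τ hτ).2)
            (rpow_nonneg (hlo τ hτ).1.le _)
    _ ≤ 4 / t ^ 2 * (1 / (4 * c ^ 2)) := by
        rw [integral_const_mul]
        gcongr
        exact integral_two_mul_sub_rpow_neg_three_le hc hct
    _ = 1 / (c ^ 2 * t ^ 2) := by field_simp

-- No `x ≠ 0` is needed: for `x = 0` both sides are `0`, the left one because `1 / 0 = 0`.
lemma one_div_mul_mul_sq_mul (k x y z : ℝ) :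
    1 / (y * x) * (k * x ^ 2 * z) = k * (x / y * z) := by
  rcases eq_or_ne x 0 with rfl | hx
  · simp
  · field_simp

/-- The Kirchhoff-formula integral bound giving the interior decay rate `t⁻²`. -/
theorem kirchhoff_integral_bound :
    ∃ C > 0, ∀ t : ℝ, 2 < t →
      (∫ τ in ((t + 1) / 2)..t,
          (1 / (τ ^ 3 * (t - τ))) * (4 * Real.pi * (t - τ) ^ 2 * |t - 2 * τ| ^ (-(3 : ℝ))))
        ≤ C / t ^ 2 := by
  refine ⟨4 * π, by positivity, fun t ht => ?_⟩
  have hsimp : EqOn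
      (fun τ => 1 / (τ ^ 3 * (t - τ)) * (4 * π * (t - τ) ^ 2 * |t - 2 * τ| ^ (-(3 : ℝ))))
      (fun τ => 4 * π * ((t - τ) / τ ^ 3 * (2 * τ - t) ^ (-3 : ℝ))) (uIcc ((t + 1) / 2) t) := by
    intro τ hτ
    rw [uIcc_of_le (by linarith)] at hτ
    have hpos : 0 < 2 * τ - t := by linarith [hτ.1]
    simp only [one_div_mul_mul_sq_mul, abs_sub_comm t, abs_of_pos hpos]
  calc _ = 4 * π * ∫ τ in (t + 1) / 2..t, (t - τ) / τ ^ 3 * (2 * τ - t) ^ (-3 : ℝ) := by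
        rw [integral_congr hsimp, integral_const_mul]
    _ ≤ 4 * π * (1 / (1 ^ 2 * t ^ 2)) := by
        gcongr
        exact integral_sub_div_pow_three_mul_rpow_le one_pos (by linarith)
    _ = 4 * π / t ^ 2 := by ring
end
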